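/- arXiv:math/0509678 — 7 statements merged into one kernel-verified Lean document; each statement's English description precedes it below -/
import Mathlib

section
/- An element a ∈ IS_n is decomposable in the sandwich semigroup (IS_n, *) (i.e. a = b * c for some b, c ∈ IS_n) if and only if rank(a) ≤ k. -/
open Equiv

/-- `IS n` : the symmetric inverse semigroup on `{1,…,n}`, modeled as partial
equivalences of `Fin n`.  Composition is left-to-right: `(x.trans y) t = y (x t)`. -/
abbrev IS (n : ℕ) := PEquiv (Fin n) (Fin n)

/-- The domain of a partial injective transformation. -/
def sdom {n : ℕ} (x : IS n) : Set (Fin n) := {a | (x a).isSome}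

/-- The image of a partial injective transformation. -/
def sim {n : ℕ} (x : IS n) : Set (Fin n) := {b | (x.symm b).isSome}

/-- The rank of a partial injective transformation: the cardinality of its image. -/
noncomputable def srank {n : ℕ} (x : IS n) : ℕ := Nat.card (sim x)

/-- The set `A = {1,…,k}` inside `Fin n`, i.e. the first `k` elements. -/
def SetA (n k : ℕ) : Set (Fin n) := {i | (i : ℕ) < k}

/-- The idempotent `e` acting identically on `A`, with `dom e = im e = A`. -/
def sandE (n k : ℕ) : IS n where
  toFun i := if (i : ℕ) < k then some i else none
  invFun i := if (i : ℕ) < k then some i else none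
  inv a b := by
    try dsimp only
    split_ifs with h1 h2 <;>
      simp_all [Option.mem_def, eq_comm] <;> rintro rfl <;> omega

/-- The sandwich multiplication `x * y = x e y` (left-to-right composition). -/
def smul (n k : ℕ) (x y : IS n) : IS n := (x.trans (sandE n k)).trans y

/-! A product `x * y = x e y` factors through `e`, whose domain is `A`, so its rank is at most
`|A| ≤ k`. Conversely, if `rank a ≤ k` then `|dom a| ≤ |A|`, so some permutation `σ` of `N`
maps `dom a` into `A`; then `σ * (σ⁻¹ a) = σ e σ⁻¹ a = a`, because `σ e σ⁻¹` is the identity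
on `σ⁻¹(A) ⊇ dom a`. -/

open Set

lemma Equiv.Perm.exists_mapsTo_of_card_le {α : Type*} [Finite α] {s t : Set α}
    (h : Nat.card s ≤ Nat.card t) : ∃ σ : Perm α, MapsTo σ s t := by
  classical
  rw [Nat.card_coe_set_eq, Nat.card_coe_set_eq] at h
  obtain ⟨u, hut, hu⟩ := exists_subset_card_eq h
  obtain ⟨e⟩ : Nonempty (s ≃ u) :=
    Finite.card_eq.mp (by rw [Nat.card_coe_set_eq, Nat.card_coe_set_eq, hu])
  exact ⟨e.extendSubtype, fun x hx => hut (e.extendSubtype_mem x hx)⟩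

section IS

variable {n : ℕ}

lemma card_sim_le_card_sdom (x : IS n) : Nat.card (sim x) ≤ Nat.card (sdom x) := by
  refine Nat.card_le_card_of_injective
    (fun y => ⟨(x.symm y).get y.2, x.symm.isSome_symm_get y.2⟩) fun y₁ y₂ h => ?_
  have h' : (x.symm y₁).get y₁.2 = (x.symm y₂).get y₂.2 := congrArg Subtype.val h
  exact Subtype.ext (x.symm.inj (Option.get_mem y₁.2) (h' ▸ Option.get_mem y₂.2))

lemma srank_eq_card_sdom (x : IS n) : srank x = Nat.card (sdom x) :=
  le_antisymm (card_sim_le_card_sdom x) (card_sim_le_card_sdom x.symm)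

lemma srank_symm (x : IS n) : srank x.symm = srank x :=
  (srank_eq_card_sdom x).symm

lemma srank_le (x : IS n) : srank x ≤ n :=
  (Finite.card_subtype_le _).trans_eq (Nat.card_fin n)

lemma sim_trans_subset (x y : IS n) : sim (x.trans y) ⊆ sim y := fun b hb => by
  rw [sim, mem_ofPred_eq, PEquiv.symm_trans_rev] at hb
  exact Option.isSome_of_isSome_bind hb

lemma srank_trans_le_right (x y : IS n) : srank (x.trans y) ≤ srank y :=
  Nat.card_mono (toFinite _) (sim_trans_subset x y)

lemma srank_trans_le_left (x y : IS n) : srank (x.trans y) ≤ srank x :=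
  calc srank (x.trans y) = srank (y.symm.trans x.symm) := by
        rw [← PEquiv.symm_trans_rev, srank_symm]
    _ ≤ srank x.symm := srank_trans_le_right _ _
    _ = srank x := srank_symm x

lemma sdom_sandE (k : ℕ) : sdom (sandE n k) = SetA n k := by
  ext i
  simp [sdom, SetA, sandE]

lemma card_setA (k : ℕ) : Nat.card (SetA n k) = min n k := by
  rw [Nat.card_coe_set_eq, SetA, ncard_eq_toFinset_card', toFinset_ofPred]
  exact Fin.card_filter_val_lt

lemma srank_smul_le (k : ℕ) (x y : IS n) : srank (smul n k x y) ≤ min n k :=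
  calc srank (smul n k x y) ≤ srank (x.trans (sandE n k)) := srank_trans_le_left _ _
    _ ≤ srank (sandE n k) := srank_trans_le_right _ _
    _ = min n k := by rw [srank_eq_card_sdom, sdom_sandE, card_setA]

lemma smul_toPEquiv_symm_trans {k : ℕ} {σ : Perm (Fin n)} {a : IS n}
    (h : MapsTo σ (sdom a) (SetA n k)) : smul n k σ.toPEquiv (σ.symm.toPEquiv.trans a) = a := by
  refine PEquiv.ext fun t => ?_
  by_cases ht : (σ t : ℕ) < k
  · simp [smul, PEquiv.trans, sandE, ht]
  · have hat : a t = none := Option.not_isSome_iff_eq_none.mp fun hs => ht (h hs)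
    simp [smul, PEquiv.trans, sandE, ht, hat]

end IS

theorem decomposable_iff_rank_le_general (n k : ℕ) (a : IS n) :
    (∃ b c : IS n, smul n k b c = a) ↔ srank a ≤ k := by
  refine ⟨fun ⟨b, c, hbc⟩ => hbc ▸ (srank_smul_le k b c).trans (min_le_right n k), fun ha => ?_⟩
  have hdom : Nat.card (sdom a) ≤ Nat.card (SetA n k) := by
    rw [← srank_eq_card_sdom, card_setA]
    exact le_min (srank_le a) ha
  obtain ⟨σ, hσ⟩ := Perm.exists_mapsTo_of_card_le hdom
  exact ⟨σ.toPEquiv, σ.symm.toPEquiv.trans a, smul_toPEquiv_symm_trans hσ⟩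

/-- `a` is decomposable in `(IS_n, *)` iff `rank a ≤ k`. -/
theorem decomposable_iff_rank_le (n k : ℕ) (hk : 1 ≤ k) (hkn : k ≤ n) (a : IS n) :
    (∃ b c : IS n, smul n k b c = a) ↔ srank a ≤ k :=
  decomposable_iff_rank_le_general n k a
end

section
/- The relation ∼ is a congruence on the sandwich semigroup (IS_n, *): it is an equivalence relation, and if a ∼ a₁ and b ∼ b₁ then a * b ∼ a₁ * b₁ (in fact a * b = a₁ * b₁). -/
open Equiv

/-- `a` is decomposable in `(IS_n, *)` if `a = b * c` for some `b, c`. -/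
def Decomp (n k : ℕ) (a : IS n) : Prop := ∃ b c : IS n, smul n k b c = a

/-- `M₁(a) = {x ∈ dom a : x ∈ A, a x ∈ A}`. -/
def M1 (n k : ℕ) (a : IS n) : Set (Fin n) :=
  {x | x ∈ SetA n k ∧ ∃ y ∈ SetA n k, a x = some y}

/-- `M₂(a) = {x ∈ dom a : x ∈ A, a x ∈ Ā}`. -/
def M2 (n k : ℕ) (a : IS n) : Set (Fin n) :=
  {x | x ∈ SetA n k ∧ ∃ y, y ∉ SetA n k ∧ a x = some y}

/-- `M₃(a) = {x ∈ dom a : x ∈ Ā, a x ∈ A}`. -/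
def M3 (n k : ℕ) (a : IS n) : Set (Fin n) :=
  {x | x ∉ SetA n k ∧ ∃ y ∈ SetA n k, a x = some y}

/-- The relation `∼` : for indecomposable `a, b`, `a ∼ b` iff `Mᵢ(a) = Mᵢ(b)` for
`i = 1,2,3` and `a x = b x` on `M₁(a) ∪ M₂(a) ∪ M₃(a)`; if `a` or `b` is
decomposable, `a ∼ b` iff `a = b`. -/
def SimRel (n k : ℕ) (a b : IS n) : Prop :=
  (¬ Decomp n k a ∧ ¬ Decomp n k b ∧ M1 n k a = M1 n k b ∧ M2 n k a = M2 n k b ∧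
    M3 n k a = M3 n k b ∧ ∀ x ∈ M1 n k a ∪ M2 n k a ∪ M3 n k a, a x = b x)
  ∨ ((Decomp n k a ∨ Decomp n k b) ∧ a = b)

/-!
Both factors of a sandwich product only enter through `a ↦ a e` and `b ↦ e b`, since
`a * b = (a e) b = a (e b)`. The map `a e` only remembers the arrows of `a` landing in `A`,
and `e b` only the arrows of `b` starting in `A`; both kinds of arrows lie over
`M₁ ∪ M₂ ∪ M₃`, where `∼`-related maps agree. Hence `a ∼ a₁` and `b ∼ b₁` force
`a * b = a₁ * b₁`, and a product is decomposable, so it is `∼`-related to itself.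
-/

namespace PEquiv

variable {α β : Type*}

theorem trans_ofSet_eq_of_forall_mem {f g : α ≃. β} {s : Set β} [DecidablePred (· ∈ s)]
    (h : ∀ x, ∀ y ∈ s, f x = some y ↔ g x = some y) :
    f.trans (ofSet s) = g.trans (ofSet s) := by
  ext x y
  simp only [trans_eq_some, ofSet_eq_some_iff]
  constructor
  · rintro ⟨_, hx, rfl, hy⟩
    exact ⟨y, (h x y hy).1 hx, rfl, hy⟩
  · rintro ⟨_, hx, rfl, hy⟩
    exact ⟨y, (h x y hy).2 hx, rfl, hy⟩

theorem ofSet_trans_eq_of_eqOn {f g : α ≃. β} {s : Set α} [DecidablePred (· ∈ s)]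
    (h : ∀ x ∈ s, f x = g x) :
    (ofSet s).trans f = (ofSet s).trans g := by
  ext x y
  simp only [trans_eq_some, ofSet_eq_some_iff]
  constructor
  · rintro ⟨z, ⟨rfl, hz⟩, hy⟩
    exact ⟨z, ⟨rfl, hz⟩, by rwa [← h z hz]⟩
  · rintro ⟨z, ⟨rfl, hz⟩, hy⟩
    exact ⟨z, ⟨rfl, hz⟩, by rwa [h z hz]⟩

end PEquiv

section SandwichSemigroup

variable {n k : ℕ}

instance : DecidablePred (· ∈ SetA n k) := fun i => inferInstanceAs (Decidable ((i : ℕ) < k))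

theorem sandE_eq_ofSet : sandE n k = PEquiv.ofSet (SetA n k) := rfl

theorem mem_M1_union_M2_union_M3 {a : IS n} {x : Fin n} :
    x ∈ M1 n k a ∪ M2 n k a ∪ M3 n k a ↔
      ∃ y, a x = some y ∧ (x ∈ SetA n k ∨ y ∈ SetA n k) := by
  simp only [M1, M2, M3, Set.mem_union, Set.mem_ofPred_eq]
  constructor
  · rintro ((⟨hx, y, -, hy⟩ | ⟨hx, y, -, hy⟩) | ⟨-, y, hyA, hy⟩)
    exacts [⟨y, hy, .inl hx⟩, ⟨y, hy, .inl hx⟩, ⟨y, hy, .inr hyA⟩]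
  · rintro ⟨y, hy, hxy⟩
    by_cases hx : x ∈ SetA n k <;> by_cases hyA : y ∈ SetA n k <;> simp_all

theorem simRel_refl (a : IS n) : SimRel n k a a := by
  by_cases h : Decomp n k a
  · exact .inr ⟨.inl h, rfl⟩
  · exact .inl ⟨h, h, rfl, rfl, rfl, fun _ _ => rfl⟩

theorem SimRel.symm {a b : IS n} : SimRel n k a b → SimRel n k b a := by
  rintro (⟨ha, hb, h1, h2, h3, hv⟩ | ⟨hd, rfl⟩)
  · exact .inl ⟨hb, ha, h1.symm, h2.symm, h3.symm,
      fun x hx => (hv x (by rwa [h1, h2, h3])).symm⟩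
  · exact .inr ⟨hd.symm, rfl⟩

theorem SimRel.trans {a b c : IS n} : SimRel n k a b → SimRel n k b c → SimRel n k a c := by
  rintro hab (⟨hb, hc, h1', h2', h3', hv'⟩ | ⟨-, rfl⟩)
  · rcases hab with ⟨ha, -, h1, h2, h3, hv⟩ | ⟨-, rfl⟩
    · exact .inl ⟨ha, hc, h1.trans h1', h2.trans h2', h3.trans h3',
        fun x hx => (hv x hx).trans (hv' x (by rwa [← h1, ← h2, ← h3]))⟩
    · exact .inl ⟨hb, hc, h1', h2', h3', hv'⟩
  · exact hab

theorem simRel_equivalence : Equivalence (SimRel n k) :=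
  ⟨simRel_refl, SimRel.symm, SimRel.trans⟩

theorem SimRel.apply_eq_some {a a₁ : IS n} {x y : Fin n} (h : SimRel n k a a₁)
    (hxy : a x = some y) (hA : x ∈ SetA n k ∨ y ∈ SetA n k) : a₁ x = some y := by
  rcases h with ⟨-, -, -, -, -, hv⟩ | ⟨-, rfl⟩
  · rw [← hv x (mem_M1_union_M2_union_M3.2 ⟨y, hxy, hA⟩), hxy]
  · exact hxy

theorem SimRel.apply_eq_some_iff {a a₁ : IS n} {x y : Fin n} (h : SimRel n k a a₁)
    (hA : x ∈ SetA n k ∨ y ∈ SetA n k) : a x = some y ↔ a₁ x = some y :=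
  ⟨fun hxy => h.apply_eq_some hxy hA, fun hxy => h.symm.apply_eq_some hxy hA⟩

theorem SimRel.trans_sandE_eq {a a₁ : IS n} (h : SimRel n k a a₁) :
    a.trans (sandE n k) = a₁.trans (sandE n k) := by
  rw [sandE_eq_ofSet]
  exact PEquiv.trans_ofSet_eq_of_forall_mem fun _ _ hy => h.apply_eq_some_iff (.inr hy)

theorem SimRel.sandE_trans_eq {b b₁ : IS n} (h : SimRel n k b b₁) :
    (sandE n k).trans b = (sandE n k).trans b₁ := by
  rw [sandE_eq_ofSet]
  exact PEquiv.ofSet_trans_eq_of_eqOn fun _ hx =>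
    Option.ext fun _ => h.apply_eq_some_iff (.inl hx)

theorem SimRel.smul_eq {a a₁ b b₁ : IS n} (ha : SimRel n k a a₁) (hb : SimRel n k b b₁) :
    smul n k a b = smul n k a₁ b₁ := by
  unfold smul
  rw [PEquiv.trans_assoc, hb.sandE_trans_eq, ← PEquiv.trans_assoc, ha.trans_sandE_eq]

end SandwichSemigroup

theorem simRel_is_congruence_general (n k : ℕ) :
    Equivalence (SimRel n k) ∧
    ∀ a a₁ b b₁ : IS n, SimRel n k a a₁ → SimRel n k b b₁ →
      smul n k a b = smul n k a₁ b₁ ∧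
      SimRel n k (smul n k a b) (smul n k a₁ b₁) := by
  refine ⟨simRel_equivalence, fun a a₁ b b₁ ha hb => ?_⟩
  have heq := ha.smul_eq hb
  exact ⟨heq, .inr ⟨.inl ⟨a, b, rfl⟩, heq⟩⟩

/-- `∼` is a congruence on `(IS_n, *)`: it is an equivalence
relation, and `a ∼ a₁`, `b ∼ b₁` imply `a * b ∼ a₁ * b₁` (in fact equality). -/
theorem simRel_is_congruence (n k : ℕ) (hk : 1 ≤ k) (hkn : k ≤ n) :
    Equivalence (SimRel n k) ∧
    ∀ a a₁ b b₁ : IS n, SimRel n k a a₁ → SimRel n k b b₁ →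
      smul n k a b = smul n k a₁ b₁ ∧
      SimRel n k (smul n k a b) (smul n k a₁ b₁) :=
  simRel_is_congruence_general n k
end

section
/- If an automorphism π of (IS_n, *) is of the form π = τ_(g,h₁,h₂) for some g ∈ S(A), h₁, h₂ ∈ S(Ā) and also satisfies π(a) ∼ a for all a ∈ IS_n, then π is the identity map on IS_n. -/
open Equiv

/-- `g⋈h` : the permutation of `Fin n` acting as `g` on `A` and as `h` on `Ā`. -/
def bowtie {n : ℕ} (k : ℕ) (g : Perm {x : Fin n // (x : ℕ) < k})
    (h : Perm {x : Fin n // ¬ (x : ℕ) < k}) : Perm (Fin n) :=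
  Equiv.Perm.subtypeCongr g h

/-- `τ_(g,h₁,h₂) : a ↦ (g⋈h₁)⁻¹ · a · (g⋈h₂)` (ordinary, left-to-right, composition). -/
def tauMap {n : ℕ} (k : ℕ) (g : Perm {x : Fin n // (x : ℕ) < k})
    (h₁ h₂ : Perm {x : Fin n // ¬ (x : ℕ) < k}) (a : IS n) : IS n :=
  ((bowtie k g h₁).symm.toPEquiv.trans a).trans (bowtie k g h₂).toPEquiv

/-!
A partial bijection with a single arrow `x ↦ y` is decomposable as soon as `x ∈ A` or
`y ∈ A`, since it factors through the idempotent `e` at that point. So `∼` forces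
`τ = τ_(g,h₁,h₂)` to fix every such arrow; as `τ` sends `x ↦ y` to
`(g⋈h₁) x ↦ (g⋈h₂) y` and `A` is nonempty, both `g⋈h₁` and `g⋈h₂` are the identity.
-/

open PEquiv

section Sandwich

variable {n k : ℕ}

lemma mem_sandE_of_lt {x : Fin n} (hx : (x : ℕ) < k) : x ∈ sandE n k x :=
  if_pos hx

lemma decomp_single (x y : Fin n) (h : (x : ℕ) < k ∨ (y : ℕ) < k) :
    Decomp n k (single x y) := by
  rcases h with hx | hy
  · exact ⟨single x x, single x y, by
      rw [smul, single_trans_of_mem x (mem_sandE_of_lt hx), single_trans_single]⟩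
  · exact ⟨single x y, single y y, by
      rw [smul, single_trans_of_mem x (mem_sandE_of_lt hy), single_trans_single]⟩

lemma SimRel.eq_of_decomp_right {a b : IS n} (hab : SimRel n k a b) (hb : Decomp n k b) :
    a = b := by
  rcases hab with ⟨-, hnd, -⟩ | ⟨-, rfl⟩
  · exact absurd hb hnd
  · rfl

end Sandwich

lemma PEquiv.single_eq_single_iff {α β : Type*} [DecidableEq α] [DecidableEq β] {x x' : α} {y y' : β} :
    single x y = single x' y' ↔ x = x' ∧ y = y' := by
  refine ⟨fun h => ?_, fun ⟨hx, hy⟩ => hx ▸ hy ▸ rfl⟩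
  have hmem : y ∈ single x' y' x := h ▸ mem_single x y
  exact (mem_single_iff _ _ _ _).1 hmem

section Tau

variable {n k : ℕ} {g : Perm {x : Fin n // (x : ℕ) < k}}
  {h₁ h₂ : Perm {x : Fin n // ¬ (x : ℕ) < k}}

lemma tauMap_single (x y : Fin n) :
    tauMap k g h₁ h₂ (single x y) = single (bowtie k g h₁ x) (bowtie k g h₂ y) := by
  have hx : x ∈ (bowtie k g h₁).symm.toPEquiv (bowtie k g h₁ x) := by
    rw [toPEquiv_apply, symm_apply_apply]; rfl
  have hy : bowtie k g h₂ y ∈ (bowtie k g h₂).toPEquiv y := toPEquiv_apply _ y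
  rw [tauMap, trans_single_of_mem y hx, single_trans_of_mem _ hy]

lemma bowtie_eq_one_of_simRel (hk : 1 ≤ k)
    (hsim : ∀ a : IS n, SimRel n k (tauMap k g h₁ h₂ a) a) :
    bowtie k g h₁ = 1 ∧ bowtie k g h₂ = 1 := by
  have fixes : ∀ x y : Fin n, ((x : ℕ) < k ∨ (y : ℕ) < k) →
      bowtie k g h₁ x = x ∧ bowtie k g h₂ y = y := fun x y hxy =>
    single_eq_single_iff.1 <| (tauMap_single x y).symm.trans <|
      (hsim _).eq_of_decomp_right (decomp_single x y hxy)
  exact ⟨Equiv.ext fun x => (fixes x ⟨0, x.pos⟩ (.inr hk)).1,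
    Equiv.ext fun y => (fixes ⟨0, y.pos⟩ y (.inl hk)).2⟩

end Tau

theorem tau_simRel_eq_id_general (n k : ℕ) (hk : 1 ≤ k)
    (g : Perm {x : Fin n // (x : ℕ) < k})
    (h₁ h₂ : Perm {x : Fin n // ¬ (x : ℕ) < k})
    (hsim : ∀ a : IS n, SimRel n k (tauMap k g h₁ h₂ a) a) :
    ∀ a : IS n, tauMap k g h₁ h₂ a = a := by
  obtain ⟨hB₁, hB₂⟩ := bowtie_eq_one_of_simRel hk hsim
  intro a
  rw [tauMap, hB₁, hB₂, Perm.one_def, Equiv.refl_symm, toPEquiv_refl, PEquiv.refl_trans,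
    PEquiv.trans_refl]

/-- if `π = τ_(g,h₁,h₂)` satisfies `π a ∼ a` for all `a`, then `π`
is the identity map on `IS_n`. -/
theorem tau_simRel_eq_id (n k : ℕ) (hk : 1 ≤ k) (hkn : k ≤ n)
    (g : Perm {x : Fin n // (x : ℕ) < k})
    (h₁ h₂ : Perm {x : Fin n // ¬ (x : ℕ) < k})
    (hsim : ∀ a : IS n, SimRel n k (tauMap k g h₁ h₂ a) a) :
    ∀ a : IS n, tauMap k g h₁ h₂ a = a :=
  tau_simRel_eq_id_general n k hk g h₁ h₂ hsim
end

section
/- Every semigroup automorphism σ of (IS_n, *) factors as σ = τ ∘' π, where τ = τ_(g,h₁,h₂) for some g ∈ S(A), h₁, h₂ ∈ S(Ā), and π is a bijection of IS_n satisfying π(a) ∼ a for all a ∈ IS_n (here ∘' denotes the composition 'apply π first, then τ'). -/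
open Equiv

/-!
Write `[p ↦ q]` for the rank-one element `PEquiv.single p q`. The minimal nonzero idempotents of
`(IS_n, *)` are exactly the `[q ↦ q]` with `q ∈ A`, so an automorphism `σ` permutes them. Fixing
`a ∈ A`, every rank-one element factors as `[p ↦ q] = [p ↦ a] * [a ↦ q]`, and multiplying
`σ [p ↦ a]` resp. `σ [a ↦ q]` by the idempotent `σ [a ↦ a]` forces them to be rank one again.
Hence `σ [p ↦ q] = [F₁ p ↦ F₂ q]` for permutations `F₁, F₂` of `N` which preserve `A` and agree
on it, i.e. `F₁ = g⋈h₁` and `F₂ = g⋈h₂`. Then `π = τ⁻¹ ∘ σ` is an automorphism fixing every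
rank-one element. Multiplying by `[q ↦ q]` on either side shows that `π a` and `a` agree on `A`
and have the same preimages of points of `A`; these data determine every product `b * c`, so `π`
fixes decomposable elements, and for indecomposable `a` they are exactly what `π a ∼ a` asks for.
-/

namespace SandwichIS

open PEquiv

variable {n k : ℕ}

lemma sandE_apply (t : Fin n) : sandE n k t = if (t : ℕ) < k then some t else none := rfl

lemma sandE_symm : (sandE n k).symm = sandE n k := rfl

lemma sandE_trans_sandE : (sandE n k).trans (sandE n k) = sandE n k := by
  refine PEquiv.ext fun t => ?_
  by_cases ht : (t : ℕ) < k <;> simp [PEquiv.trans, sandE_apply, ht]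

lemma smul_eq_trans_sandE_trans (x y : IS n) :
    smul n k x y = (x.trans (sandE n k)).trans ((sandE n k).trans y) := by
  rw [smul, PEquiv.trans_assoc, PEquiv.trans_assoc, ← PEquiv.trans_assoc (sandE n k) (sandE n k),
    sandE_trans_sandE]

lemma single_smul {q : Fin n} (hq : (q : ℕ) < k) (p : Fin n) (x : IS n) :
    smul n k (single p q) x = (single p q).trans x := by
  rw [smul, single_trans_of_mem p (show q ∈ sandE n k q from if_pos hq)]

lemma smul_single {q : Fin n} (hq : (q : ℕ) < k) (x : IS n) (p : Fin n) :
    smul n k x (single q p) = x.trans (single q p) := by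
  rw [smul, PEquiv.trans_assoc, trans_single_of_mem p (show q ∈ sandE n k q from if_pos hq)]

lemma single_ne_bot (p q : Fin n) : single p q ≠ ⊥ := fun h => by
  simpa using congrArg (· p) h

lemma single_injective {p q p' q' : Fin n} (h : single p q = single p' q') :
    p = p' ∧ q = q' := by
  have h' : q ∈ single p' q' p := by rw [← h]; exact mem_single p q
  exact (mem_single_iff _ _ _ _).1 h'

lemma apply_eq_of_single_smul_eq {q : Fin n} (hq : (q : ℕ) < k) {x y : IS n}
    (h : smul n k (single q q) x = smul n k (single q q) y) : x q = y q := by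
  rw [single_smul hq, single_smul hq] at h
  simpa [PEquiv.trans] using congrArg (· q) h

lemma symm_apply_eq_of_smul_single_eq {q : Fin n} (hq : (q : ℕ) < k) {x y : IS n}
    (h : smul n k x (single q q) = smul n k y (single q q)) : x.symm q = y.symm q := by
  rw [smul_single hq, smul_single hq] at h
  have h' := congrArg PEquiv.symm h
  rw [symm_trans_rev, symm_trans_rev, symm_single] at h'
  simpa [PEquiv.trans] using congrArg (· q) h'

lemma exists_eq_single_of_single_smul_eq {q : Fin n} (hq : (q : ℕ) < k) {x : IS n}
    (hx : x ≠ ⊥) (h : smul n k (single q q) x = x) : ∃ s, x = single q s := by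
  rw [single_smul hq] at h
  rcases hxq : x q with _ | s
  · exact absurd (h.symm.trans (single_trans_of_eq_none q hxq)) hx
  · exact ⟨s, h.symm.trans (single_trans_of_mem q hxq)⟩

lemma exists_eq_single_of_smul_single_eq {q : Fin n} (hq : (q : ℕ) < k) {x : IS n}
    (hx : x ≠ ⊥) (h : smul n k x (single q q) = x) : ∃ w, x = single w q := by
  rw [smul_single hq] at h
  rcases hxq : x.symm q with _ | w
  · exact absurd (h.symm.trans (trans_single_of_eq_none q hxq)) hx
  · exact ⟨w, h.symm.trans (trans_single_of_mem q ((eq_some_iff x).1 hxq))⟩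

lemma smul_congr {b b' c c' : IS n} (hb : ∀ s : Fin n, (s : ℕ) < k → b.symm s = b'.symm s)
    (hc : ∀ s : Fin n, (s : ℕ) < k → c s = c' s) : smul n k b c = smul n k b' c' := by
  have sandE_trans_congr : ∀ {y y' : IS n}, (∀ s : Fin n, (s : ℕ) < k → y s = y' s) →
      (sandE n k).trans y = (sandE n k).trans y' := fun h => PEquiv.ext fun t => by
    by_cases ht : (t : ℕ) < k <;> simp [PEquiv.trans, sandE_apply, ht, h]
  have hb' : b.trans (sandE n k) = b'.trans (sandE n k) := by
    apply symm_injective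
    rw [symm_trans_rev, symm_trans_rev, sandE_symm, sandE_trans_congr hb]
  rw [smul_eq_trans_sandE_trans, smul_eq_trans_sandE_trans, hb', sandE_trans_congr hc]

lemma eq_and_lt_of_smul_self_eq {x : IS n} (hx : smul n k x x = x) {t s : Fin n}
    (h : x t = some s) : s = t ∧ (t : ℕ) < k := by
  have hxt := congrArg (· t) hx
  by_cases hs : (s : ℕ) < k
  · simp only [smul, PEquiv.trans, coe_mk, h, Option.bind_some, sandE_apply, if_pos hs] at hxt
    have hst : s = t := PEquiv.inj x hxt h
    exact ⟨hst, hst ▸ hs⟩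
  · simp [smul, PEquiv.trans, h, sandE_apply, hs] at hxt

def IsMinimalIdempotent (n k : ℕ) (x : IS n) : Prop :=
  x ≠ ⊥ ∧ smul n k x x = x ∧ ∀ y, smul n k y y = y → smul n k x y = ⊥ ∨ smul n k x y = x

lemma isMinimalIdempotent_iff {x : IS n} :
    IsMinimalIdempotent n k x ↔ ∃ q : Fin n, (q : ℕ) < k ∧ x = single q q := by
  constructor
  · rintro ⟨hx, hxx, hmin⟩
    obtain ⟨t, s, hts⟩ : ∃ t s, x t = some s := by
      by_contra! h
      exact hx (PEquiv.ext fun t => Option.eq_none_iff_forall_ne_some.2 (h t))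
    obtain ⟨rfl, hs⟩ := eq_and_lt_of_smul_self_eq hxx hts
    have hsingle : smul n k x (single s s) = single s s := by
      rw [smul_single hs, trans_single_of_mem s hts]
    refine ⟨s, hs, ?_⟩
    rcases hmin (single s s) (by rw [single_smul hs, single_trans_single]) with h | h
    · exact absurd (hsingle.symm.trans h) (single_ne_bot s s)
    · exact h.symm.trans hsingle
  · rintro ⟨q, hq, rfl⟩
    refine ⟨single_ne_bot q q, by rw [single_smul hq, single_trans_single], fun y hy => ?_⟩
    rw [single_smul hq]
    rcases hyq : y q with _ | s
    · exact Or.inl (single_trans_of_eq_none q hyq)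
    · obtain ⟨rfl, -⟩ := eq_and_lt_of_smul_self_eq hy hyq
      exact Or.inr (single_trans_of_mem _ hyq)

def IsSandwichHom (n k : ℕ) (f : IS n → IS n) : Prop :=
  ∀ x y : IS n, f (smul n k x y) = smul n k (f x) (f y)

namespace IsSandwichHom

variable {σ : Perm (IS n)} (hσ : IsSandwichHom n k σ)
include hσ

lemma symm : IsSandwichHom n k σ.symm := fun x y => σ.injective <| by
  rw [hσ, Equiv.apply_symm_apply, Equiv.apply_symm_apply, Equiv.apply_symm_apply]

lemma map_bot : σ ⊥ = ⊥ := by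
  have h := hσ ⊥ (σ.symm ⊥)
  rw [smul, PEquiv.bot_trans, PEquiv.bot_trans, Equiv.apply_symm_apply] at h
  rw [h, smul, PEquiv.trans_bot]

lemma map_ne_bot {x : IS n} (hx : x ≠ ⊥) : σ x ≠ ⊥ :=
  fun h => hx (σ.injective (h.trans hσ.map_bot.symm))

lemma isMinimalIdempotent {x : IS n} (hx : IsMinimalIdempotent n k x) :
    IsMinimalIdempotent n k (σ x) := by
  obtain ⟨hx, hxx, hmin⟩ := hx
  refine ⟨hσ.map_ne_bot hx, by rw [← hσ, hxx], fun y hy => ?_⟩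
  have hy' : smul n k (σ.symm y) (σ.symm y) = σ.symm y := by rw [← hσ.symm, hy]
  rw [← Equiv.apply_symm_apply σ y, ← hσ, ← hσ.map_bot]
  exact (hmin _ hy').imp (congrArg σ) (congrArg σ)

lemma exists_map_single_eq_single_right {a b : Fin n} (ha : (a : ℕ) < k) (hb : (b : ℕ) < k)
    (hab : σ (single a a) = single b b) (p : Fin n) : ∃ w, σ (single p a) = single w b :=
  exists_eq_single_of_smul_single_eq hb (hσ.map_ne_bot (single_ne_bot p a)) <| by
    rw [← hab, ← hσ, smul_single ha, single_trans_single]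

lemma exists_map_single_eq_single_left {a b : Fin n} (ha : (a : ℕ) < k) (hb : (b : ℕ) < k)
    (hab : σ (single a a) = single b b) (q : Fin n) : ∃ s, σ (single a q) = single b s :=
  exists_eq_single_of_single_smul_eq hb (hσ.map_ne_bot (single_ne_bot a q)) <| by
    rw [← hab, ← hσ, single_smul ha, single_trans_single]

lemma exists_perm_map_single {a : Fin n} (ha : (a : ℕ) < k) :
    ∃ F₁ F₂ : Perm (Fin n), (∀ p : Fin n, (p : ℕ) < k → (F₁ p : ℕ) < k ∧ F₂ p = F₁ p) ∧
      ∀ p q, σ (single p q) = single (F₁ p) (F₂ q) := by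
  have minimal_single : ∀ p : Fin n, (p : ℕ) < k → ∃ r : Fin n, (r : ℕ) < k ∧
      σ (single p p) = single r r := fun p hp =>
    isMinimalIdempotent_iff.1 (hσ.isMinimalIdempotent (isMinimalIdempotent_iff.2 ⟨p, hp, rfl⟩))
  obtain ⟨b, hb, hab⟩ := minimal_single a ha
  choose f₁ hf₁ using hσ.exists_map_single_eq_single_right ha hb hab
  choose f₂ hf₂ using hσ.exists_map_single_eq_single_left ha hb hab
  have hf₁_inj : Function.Injective f₁ := fun p p' h => (single_injective <| σ.injective
    (show σ (single p a) = σ (single p' a) by rw [hf₁, hf₁, h])).1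
  have hf₂_inj : Function.Injective f₂ := fun q q' h => (single_injective <| σ.injective
    (show σ (single a q) = σ (single a q') by rw [hf₂, hf₂, h])).2
  have hmap : ∀ p q, σ (single p q) = single (f₁ p) (f₂ q) := fun p q => by
    rw [← single_trans_single p a q, ← single_smul ha, hσ, hf₁, hf₂, single_smul hb,
      single_trans_single]
  refine ⟨Equiv.ofBijective f₁ (Finite.injective_iff_bijective.1 hf₁_inj),
    Equiv.ofBijective f₂ (Finite.injective_iff_bijective.1 hf₂_inj), fun p hp => ?_, hmap⟩
  obtain ⟨r, hr, hpr⟩ := minimal_single p hp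
  obtain ⟨rfl, h⟩ := single_injective ((hmap p p).symm.trans hpr)
  exact ⟨hr, h⟩

end IsSandwichHom

lemma bowtie_apply_of_lt (g : Perm {x : Fin n // (x : ℕ) < k})
    (h : Perm {x : Fin n // ¬ (x : ℕ) < k}) {t : Fin n} (ht : (t : ℕ) < k) :
    bowtie k g h t = g ⟨t, ht⟩ :=
  Perm.subtypeCongr.left_apply g h ht

lemma bowtie_apply_of_not_lt (g : Perm {x : Fin n // (x : ℕ) < k})
    (h : Perm {x : Fin n // ¬ (x : ℕ) < k}) {t : Fin n} (ht : ¬ (t : ℕ) < k) :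
    bowtie k g h t = h ⟨t, ht⟩ :=
  Perm.subtypeCongr.right_apply g h ht

lemma exists_bowtie_eq {F₁ F₂ : Perm (Fin n)}
    (hF : ∀ p : Fin n, (p : ℕ) < k → (F₁ p : ℕ) < k ∧ F₂ p = F₁ p) :
    ∃ g h₁ h₂, bowtie k g h₁ = F₁ ∧ bowtie k g h₂ = F₂ := by
  have hF₂ : ∀ p : Fin n, (p : ℕ) < k → (F₂ p : ℕ) < k := fun p hp => (hF p hp).2 ▸ (hF p hp).1
  have compl : ∀ F : Perm (Fin n), (∀ p : Fin n, (p : ℕ) < k → (F p : ℕ) < k) →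
      ∀ p : Fin n, ¬ (p : ℕ) < k → ¬ (F p : ℕ) < k := fun F hF p hp hFp =>
    hp (by simpa using Perm.perm_symm_on_of_perm_on_finite hF hFp)
  refine ⟨F₁.subtypePermOfFintype (fun p hp => (hF p hp).1),
    F₁.subtypePermOfFintype (compl F₁ fun p hp => (hF p hp).1),
    F₂.subtypePermOfFintype (compl F₂ hF₂), ?_, ?_⟩ <;>
  refine Equiv.ext fun p => ?_ <;>
  by_cases hp : (p : ℕ) < k <;>
  simp [bowtie, Perm.subtypeCongr.left_apply, Perm.subtypeCongr.right_apply, hp, hF]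

def pequivCongr {α α' β β' : Type*} (e₁ : α ≃ α') (e₂ : β ≃ β') : (α ≃. β) ≃ (α' ≃. β') where
  toFun a := (e₁.symm.toPEquiv.trans a).trans e₂.toPEquiv
  invFun a := (e₁.toPEquiv.trans a).trans e₂.symm.toPEquiv
  left_inv a := by
    dsimp only
    rw [← PEquiv.trans_assoc, ← PEquiv.trans_assoc, ← toPEquiv_trans, Equiv.self_trans_symm,
      toPEquiv_refl, PEquiv.refl_trans, PEquiv.trans_assoc, ← toPEquiv_trans, Equiv.self_trans_symm,
      toPEquiv_refl, PEquiv.trans_refl]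
  right_inv a := by
    dsimp only
    rw [← PEquiv.trans_assoc, ← PEquiv.trans_assoc, ← toPEquiv_trans, Equiv.symm_trans_self,
      toPEquiv_refl, PEquiv.refl_trans, PEquiv.trans_assoc, ← toPEquiv_trans, Equiv.symm_trans_self,
      toPEquiv_refl, PEquiv.trans_refl]

lemma pequivCongr_single {α α' β β' : Type*} [DecidableEq α] [DecidableEq α'] [DecidableEq β]
    [DecidableEq β'] (e₁ : α ≃ α') (e₂ : β ≃ β') (a : α) (b : β) :
    pequivCongr e₁ e₂ (single a b) = single (e₁ a) (e₂ b) := by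
  show (e₁.symm.toPEquiv.trans (single a b)).trans e₂.toPEquiv = _
  rw [trans_single_of_mem (a := e₁ a) b (by simp), single_trans_of_mem _ (c := e₂ b) (by simp)]

lemma isSandwichHom_pequivCongr {P Q : Perm (Fin n)}
    (h : (Q.toPEquiv.trans (sandE n k)).trans P.symm.toPEquiv = sandE n k) :
    IsSandwichHom n k (pequivCongr P Q) := fun x y => by
  have h' : ∀ z : IS n, Q.toPEquiv.trans ((sandE n k).trans (P.symm.toPEquiv.trans z)) =
      (sandE n k).trans z := fun z => by
    rw [← PEquiv.trans_assoc, ← PEquiv.trans_assoc, h]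
  simp only [pequivCongr, smul, Equiv.coe_fn_mk, PEquiv.trans_assoc, h']

lemma bowtie_trans_sandE_trans_bowtie_symm (g : Perm {x : Fin n // (x : ℕ) < k})
    (h₁ h₂ : Perm {x : Fin n // ¬ (x : ℕ) < k}) :
    ((bowtie k g h₂).toPEquiv.trans (sandE n k)).trans (bowtie k g h₁).symm.toPEquiv =
      sandE n k := by
  refine PEquiv.ext fun t => ?_
  by_cases ht : (t : ℕ) < k
  · have hg : ((g ⟨t, ht⟩ : Fin n) : ℕ) < k := (g ⟨t, ht⟩).2
    simp [PEquiv.trans, sandE_apply, bowtie_apply_of_lt _ _ ht, ht, hg, Equiv.symm_apply_eq]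
  · have hh : ¬ ((h₂ ⟨t, ht⟩ : Fin n) : ℕ) < k := (h₂ ⟨t, ht⟩).2
    simp [PEquiv.trans, sandE_apply, bowtie_apply_of_not_lt _ _ ht, ht, hh]

section FixedSingles

variable {ρ : Perm (IS n)} (hρ : IsSandwichHom n k ρ)
  (hsingle : ∀ p q : Fin n, ρ (single p q) = single p q)
include hρ hsingle

lemma map_single_trans (p q : Fin n) (x : IS n) :
    ρ ((single p q).trans x) = (single p q).trans x := by
  rcases hx : x q with _ | s
  · rw [single_trans_of_eq_none p hx, hρ.map_bot]
  · rw [single_trans_of_mem p hx, hsingle]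

lemma map_trans_single (x : IS n) (p q : Fin n) :
    ρ (x.trans (single p q)) = x.trans (single p q) := by
  rcases hx : x.symm p with _ | w
  · rw [trans_single_of_eq_none q hx, hρ.map_bot]
  · rw [trans_single_of_mem q ((eq_some_iff x).1 hx), hsingle]

lemma map_apply_of_lt (x : IS n) {q : Fin n} (hq : (q : ℕ) < k) : ρ x q = x q :=
  apply_eq_of_single_smul_eq hq <| calc
    smul n k (single q q) (ρ x) = ρ (smul n k (single q q) x) := by rw [hρ, hsingle]
    _ = smul n k (single q q) x := by rw [single_smul hq, map_single_trans hρ hsingle]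

lemma map_symm_apply_of_lt (x : IS n) {q : Fin n} (hq : (q : ℕ) < k) :
    (ρ x).symm q = x.symm q :=
  symm_apply_eq_of_smul_single_eq hq <| calc
    smul n k (ρ x) (single q q) = ρ (smul n k x (single q q)) := by rw [hρ, hsingle]
    _ = smul n k x (single q q) := by rw [smul_single hq, map_trans_single hρ hsingle]

lemma map_eq_of_decomp {a : IS n} (h : Decomp n k a) : ρ a = a := by
  obtain ⟨b, c, rfl⟩ := h
  rw [hρ]
  exact smul_congr (fun s hs => map_symm_apply_of_lt hρ hsingle b hs)
    (fun s hs => map_apply_of_lt hρ hsingle c hs)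

lemma decomp_of_decomp_map {a : IS n} (h : Decomp n k (ρ a)) : Decomp n k a :=
  ρ.injective (map_eq_of_decomp hρ hsingle h) ▸ h

end FixedSingles

lemma simRel_of_agree {a b : IS n} (ha : ¬ Decomp n k a) (hb : ¬ Decomp n k b)
    (h₁ : ∀ x : Fin n, (x : ℕ) < k → a x = b x)
    (h₂ : ∀ y : Fin n, (y : ℕ) < k → a.symm y = b.symm y) : SimRel n k a b := by
  have h₃ : ∀ x y : Fin n, (y : ℕ) < k → (a x = some y ↔ b x = some y) := fun x y hy => by
    rw [← PEquiv.eq_some_iff a, ← PEquiv.eq_some_iff b, h₂ y hy]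
  refine Or.inl ⟨ha, hb, ?_, ?_, ?_, ?_⟩
  · ext x; exact and_congr_right fun hx => by rw [h₁ x hx]
  · ext x; exact and_congr_right fun hx => by rw [h₁ x hx]
  · ext x; exact and_congr_right fun _ => exists_congr fun y => and_congr_right (h₃ x y)
  · rintro x ((⟨hx, -⟩ | ⟨hx, -⟩) | ⟨-, y, hy, hxy⟩)
    · exact h₁ x hx
    · exact h₁ x hx
    · rw [hxy, (h₃ x y hy).1 hxy]

lemma simRel_map_self {ρ : Perm (IS n)} (hρ : IsSandwichHom n k ρ)
    (hsingle : ∀ p q : Fin n, ρ (single p q) = single p q) (a : IS n) : SimRel n k (ρ a) a := by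
  by_cases hd : Decomp n k a
  · exact Or.inr ⟨Or.inr hd, map_eq_of_decomp hρ hsingle hd⟩
  · exact simRel_of_agree (fun h => hd (decomp_of_decomp_map hρ hsingle h)) hd
      (fun x hx => map_apply_of_lt hρ hsingle a hx)
      (fun y hy => map_symm_apply_of_lt hρ hsingle a hy)

end SandwichIS

open SandwichIS PEquiv in
/-- every automorphism `σ` of `(IS_n, *)` factors as
`σ = τ_(g,h₁,h₂) ∘ π` where `π` is a bijection with `π a ∼ a` for all `a`. -/
theorem aut_factorization (n k : ℕ) (hk : 1 ≤ k) (hkn : k ≤ n)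
    (σ : Equiv.Perm (IS n))
    (hσ : ∀ x y : IS n, σ (smul n k x y) = smul n k (σ x) (σ y)) :
    ∃ (g : Perm {x : Fin n // (x : ℕ) < k})
      (h₁ h₂ : Perm {x : Fin n // ¬ (x : ℕ) < k})
      (π : Equiv.Perm (IS n)),
        (∀ a, SimRel n k (π a) a) ∧
        ∀ a : IS n, σ a = tauMap k g h₁ h₂ (π a) := by
  obtain ⟨F₁, F₂, hF, hσsingle⟩ :=
    IsSandwichHom.exists_perm_map_single hσ (a := ⟨0, by omega⟩) hk
  obtain ⟨g, h₁, h₂, rfl, rfl⟩ := exists_bowtie_eq hF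
  let τ := pequivCongr (bowtie k g h₁) (bowtie k g h₂)
  have hτ : IsSandwichHom n k τ :=
    isSandwichHom_pequivCongr (bowtie_trans_sandE_trans_bowtie_symm g h₁ h₂)
  have hπ : IsSandwichHom n k (σ.trans τ.symm) := fun x y => by
    rw [Equiv.trans_apply, Equiv.trans_apply, Equiv.trans_apply, hσ, hτ.symm (σ x) (σ y)]
  have hπsingle : ∀ p q : Fin n, σ.trans τ.symm (single p q) = single p q := fun p q => by
    rw [Equiv.trans_apply, hσsingle, ← pequivCongr_single, Equiv.symm_apply_apply]
  exact ⟨g, h₁, h₂, σ.trans τ.symm, simRel_map_self hπ hπsingle,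
    fun a => (τ.apply_symm_apply (σ a)).symm⟩
end

section
/- The subgroup of Aut(IS_n, *) consisting of all automorphisms π with π(a) ∼ a for all a ∈ IS_n is a normal subgroup of Aut(IS_n, *). -/
open Equiv

/-! The relation `∼` is expressible through the sandwich multiplication alone. Agreement of the
sets `Mᵢ` and of the values on them says exactly that `a` and `b` agree on `A` and agree after
being followed by `e`, i.e. `e a = e b` and `a e = b e`; equivalently `x * a = x * b` and
`a * x = b * x` for every `x`. Decomposability is algebraic too, so every automorphism `σ`
preserves `∼`, and then `σ π σ⁻¹ a = σ (π (σ⁻¹ a)) ∼ σ (σ⁻¹ a) = a`. -/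

section

variable {n k : ℕ}

instance (x : Fin n) : Decidable (x ∈ SetA n k) := inferInstanceAs (Decidable ((x : ℕ) < k))

lemma sandE_apply (x : Fin n) : sandE n k x = if x ∈ SetA n k then some x else none := rfl

lemma sandE_apply_eq_some {x y : Fin n} :
    sandE n k x = some y ↔ x ∈ SetA n k ∧ x = y := by
  rw [sandE_apply]
  split_ifs with hx <;> simp [hx]

lemma sandE_trans_apply (a : IS n) (x : Fin n) :
    ((sandE n k).trans a) x = if x ∈ SetA n k then a x else none := by
  change (sandE n k x).bind a = _
  rw [sandE_apply]
  split_ifs <;> rfl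

lemma trans_sandE_apply_eq_some {a : IS n} {x y : Fin n} :
    (a.trans (sandE n k)) x = some y ↔ y ∈ SetA n k ∧ a x = some y := by
  simp only [PEquiv.trans_eq_some, sandE_apply_eq_some]
  grind

lemma sandE_trans_eq_iff {a b : IS n} :
    (sandE n k).trans a = (sandE n k).trans b ↔ ∀ x ∈ SetA n k, a x = b x := by
  rw [PEquiv.ext_iff]
  refine forall_congr' fun x => ?_
  rw [sandE_trans_apply, sandE_trans_apply]
  split_ifs with hx <;> simp [hx]

lemma trans_sandE_eq_iff {a b : IS n} :
    a.trans (sandE n k) = b.trans (sandE n k) ↔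
      ∀ x, ∀ y ∈ SetA n k, a x = some y ↔ b x = some y := by
  rw [PEquiv.ext_iff]
  refine forall_congr' fun x => ?_
  rw [Option.ext_iff]
  simp only [trans_sandE_apply_eq_some]
  grind

lemma mem_M1_union_M2 {a : IS n} {x : Fin n} :
    x ∈ M1 n k a ∪ M2 n k a ↔ x ∈ SetA n k ∧ (a x).isSome := by
  rcases h : a x with _ | y
  · simp [M1, M2, h]
  · by_cases hy : y ∈ SetA n k <;> simp [M1, M2, h, hy]

lemma M_eq_and_eqOn_iff {a b : IS n} :
    (M1 n k a = M1 n k b ∧ M2 n k a = M2 n k b ∧ M3 n k a = M3 n k b ∧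
        ∀ x ∈ M1 n k a ∪ M2 n k a ∪ M3 n k a, a x = b x) ↔
      (∀ x ∈ SetA n k, a x = b x) ∧
        ∀ x, ∀ y ∈ SetA n k, a x = some y ↔ b x = some y := by
  constructor
  · rintro ⟨h1, h2, h3, hv⟩
    have hA : ∀ x ∈ SetA n k, a x = b x := by
      intro x hx
      by_cases ha : (a x).isSome
      · exact hv x (Or.inl (mem_M1_union_M2.mpr ⟨hx, ha⟩))
      have hb : ¬ (b x).isSome := fun hb =>
        ha (mem_M1_union_M2.mp (by rw [h1, h2]; exact mem_M1_union_M2.mpr ⟨hx, hb⟩)).2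
      rw [Option.not_isSome_iff_eq_none.mp ha, Option.not_isSome_iff_eq_none.mp hb]
    refine ⟨hA, fun x y hy => ?_⟩
    by_cases hx : x ∈ SetA n k
    · rw [hA x hx]
    constructor
    · intro h
      rwa [← hv x (Or.inr ⟨hx, y, hy, h⟩)]
    · intro h
      have hx3 : x ∈ M3 n k a := h3 ▸ ⟨hx, y, hy, h⟩
      rwa [hv x (Or.inr hx3)]
  · rintro ⟨hA, hAy⟩
    refine ⟨?_, ?_, ?_, ?_⟩
    · ext x
      exact and_congr_right fun hx => by rw [hA x hx]
    · ext x
      exact and_congr_right fun hx => by rw [hA x hx]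
    · ext x
      exact and_congr_right fun _ => exists_congr fun y => and_congr_right fun hy => hAy x y hy
    · rintro x ((h | h) | ⟨-, y, hy, h⟩)
      · exact hA x h.1
      · exact hA x h.1
      · rw [h, (hAy x y hy).mp h]

end

def SmulIndistinguishable (n k : ℕ) (a b : IS n) : Prop :=
  ∀ x, smul n k x a = smul n k x b ∧ smul n k a x = smul n k b x

lemma smulIndistinguishable_iff {n k : ℕ} {a b : IS n} :
    SmulIndistinguishable n k a b ↔
      (sandE n k).trans a = (sandE n k).trans b ∧ a.trans (sandE n k) = b.trans (sandE n k) := by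
  constructor
  · intro h
    simpa [smul, PEquiv.refl_trans, PEquiv.trans_refl] using h (PEquiv.refl _)
  · rintro ⟨hl, hr⟩ x
    exact ⟨by simp only [smul, PEquiv.trans_assoc, hl], by simp only [smul, hr]⟩

lemma simRel_iff {n k : ℕ} {a b : IS n} :
    SimRel n k a b ↔ (¬ Decomp n k a ∧ ¬ Decomp n k b ∧ SmulIndistinguishable n k a b) ∨
      ((Decomp n k a ∨ Decomp n k b) ∧ a = b) := by
  rw [SimRel, smulIndistinguishable_iff, sandE_trans_eq_iff, trans_sandE_eq_iff,
    ← M_eq_and_eqOn_iff]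

section Automorphism

variable {n k : ℕ} {σ : Perm (IS n)}

lemma symm_map_smul (hσ : ∀ x y, σ (smul n k x y) = smul n k (σ x) (σ y)) (x y : IS n) :
    σ.symm (smul n k x y) = smul n k (σ.symm x) (σ.symm y) :=
  σ.symm_apply_eq.mpr <| by rw [hσ, σ.apply_symm_apply, σ.apply_symm_apply]

lemma decomp_apply_iff (hσ : ∀ x y, σ (smul n k x y) = smul n k (σ x) (σ y)) {a : IS n} :
    Decomp n k (σ a) ↔ Decomp n k a := by
  constructor
  · rintro ⟨b, c, h⟩
    exact ⟨σ.symm b, σ.symm c, by rw [← symm_map_smul hσ, h, σ.symm_apply_apply]⟩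
  · rintro ⟨b, c, rfl⟩
    exact ⟨σ b, σ c, (hσ b c).symm⟩

lemma SmulIndistinguishable.map (hσ : ∀ x y, σ (smul n k x y) = smul n k (σ x) (σ y))
    {a b : IS n} (h : SmulIndistinguishable n k a b) :
    SmulIndistinguishable n k (σ a) (σ b) := by
  intro x
  obtain ⟨y, rfl⟩ := σ.surjective x
  simp only [← hσ, (h y).1, (h y).2, and_self]

lemma SimRel.map (hσ : ∀ x y, σ (smul n k x y) = smul n k (σ x) (σ y))
    {a b : IS n} (h : SimRel n k a b) : SimRel n k (σ a) (σ b) := by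
  rw [simRel_iff] at h
  rw [simRel_iff, decomp_apply_iff hσ, decomp_apply_iff hσ]
  rcases h with ⟨ha, hb, hab⟩ | ⟨hd, rfl⟩
  · exact Or.inl ⟨ha, hb, SmulIndistinguishable.map hσ hab⟩
  · exact Or.inr ⟨hd, rfl⟩

end Automorphism

theorem simRel_subgroup_normal_general (n k : ℕ)
    (σ π : Equiv.Perm (IS n))
    (hσ : ∀ x y : IS n, σ (smul n k x y) = smul n k (σ x) (σ y))
    (hπ : ∀ a, SimRel n k (π a) a) :
    ∀ a : IS n, SimRel n k ((σ * π * σ⁻¹) a) a := by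
  intro a
  simpa using SimRel.map hσ (hπ (σ⁻¹ a))

/-- the subgroup of `Aut(IS_n, *)` of automorphisms `π` with
`π a ∼ a` for all `a` is normal in `Aut(IS_n, *)`: it is stable under
conjugation by any automorphism. -/
theorem simRel_subgroup_normal (n k : ℕ) (hk : 1 ≤ k) (hkn : k ≤ n)
    (σ π : Equiv.Perm (IS n))
    (hσ : ∀ x y : IS n, σ (smul n k x y) = smul n k (σ x) (σ y))
    (hπaut : ∀ x y : IS n, π (smul n k x y) = smul n k (π x) (π y))
    (hπ : ∀ a, SimRel n k (π a) a) :
    ∀ a : IS n, SimRel n k ((σ * π * σ⁻¹) a) a :=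
  simRel_subgroup_normal_general n k σ π hσ hπ
end

section
/- Let σ be a semigroup automorphism of (IS_n, *). Then there exist g ∈ S(A) and h₁, h₂ ∈ S(Ā) such that for all s, t ∈ N, σ maps the rank-one element [s ↦ t] (the partial transformation with domain {s} sending s to t) to the rank-one element [(g⋈h₁)(s) ↦ (g⋈h₂)(t)]. -/
open Equiv

/-!
An automorphism fixes the zero `⊥`. The elements `[a ↦ t]` with `a ∈ A` have an intrinsic
description in `(IS_n, *)` (`IsLeftAtom`), so `σ` maps them to rank-one elements; since `e` is
self-inverse, `x ↦ x⁻¹` is an anti-automorphism, and conjugating `σ` by it gives the same for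
`[s ↦ b]` with `b ∈ A`. Factoring `[s ↦ t] = [s ↦ a₀] * [a₀ ↦ t]` with `a₀ ∈ A` then yields
`σ [s ↦ t] = [S s ↦ T t]` for injective maps `S`, `T`. Idempotence of `[a ↦ a]` for `a ∈ A`
forces `S a = T a ∈ A`, and `y * [s ↦ v] = 0 = [v ↦ s] * y` for `s ∉ A` forces `S` and `T` to
preserve `Ā`; hence `S = g⋈h₁` and `T = g⋈h₂`.
-/

open PEquiv Function

theorem PEquiv.eq_bot_iff_forall_notMem {α β : Type*} {f : α ≃. β} :
    f = ⊥ ↔ ∀ a b, b ∉ f a :=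
  ⟨fun h a b => by simp [h], fun h => PEquiv.ext fun a => Option.eq_none_iff_forall_not_mem.2 (h a)⟩

theorem PEquiv.ne_bot_iff_exists_mem {α β : Type*} {f : α ≃. β} :
    f ≠ ⊥ ↔ ∃ a b, b ∈ f a := by
  simp [eq_bot_iff_forall_notMem]

theorem PEquiv.single_ne_bot {α β : Type*} [DecidableEq α] [DecidableEq β] (a : α) (b : β) :
    single a b ≠ ⊥ := fun h => by
  simpa [h] using mem_single a b

theorem PEquiv.single_inj {α β : Type*} [DecidableEq α] [DecidableEq β] {a c : α} {b d : β} :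
    single a b = single c d ↔ a = c ∧ b = d := by
  refine ⟨fun h => ?_, fun ⟨hac, hbd⟩ => hac ▸ hbd ▸ rfl⟩
  rw [← mem_single_iff, ← h]
  exact mem_single a b

theorem Equiv.Perm.subtypeCongr_subtypePerm {α : Type*} {p : α → Prop} [DecidablePred p]
    (f : Perm α) (h : ∀ x, p (f x) ↔ p x) :
    (f.subtypePerm h).subtypeCongr (f.subtypePerm fun x => not_congr (h x)) = f := by
  ext x
  by_cases hx : p x <;> simp [hx]

theorem exists_bowtie_eq {n k : ℕ} {S T : Fin n → Fin n} (hS : Injective S) (hT : Injective T)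
    (hSA : ∀ x, (S x : ℕ) < k ↔ (x : ℕ) < k) (hTA : ∀ x, (T x : ℕ) < k ↔ (x : ℕ) < k)
    (hST : ∀ x : Fin n, (x : ℕ) < k → S x = T x) :
    ∃ g h₁ h₂, ⇑(bowtie k g h₁) = S ∧ ⇑(bowtie k g h₂) = T := by
  set S' : Perm (Fin n) := Equiv.ofBijective S (Finite.injective_iff_bijective.1 hS)
  set T' : Perm (Fin n) := Equiv.ofBijective T (Finite.injective_iff_bijective.1 hT)
  have hg : S'.subtypePerm hSA = T'.subtypePerm hTA :=
    Equiv.ext fun x : {x : Fin n // (x : ℕ) < k} => Subtype.ext (hST x x.2)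
  refine ⟨S'.subtypePerm hSA, S'.subtypePerm fun x => not_congr (hSA x),
    T'.subtypePerm fun x => not_congr (hTA x), ?_, ?_⟩
  · exact congrArg DFunLike.coe (S'.subtypeCongr_subtypePerm hSA)
  · rw [hg]
    exact congrArg DFunLike.coe (T'.subtypeCongr_subtypePerm hTA)

section SandwichProduct

variable {n k : ℕ}

theorem mem_sandE {i j : Fin n} : j ∈ sandE n k i ↔ (i : ℕ) < k ∧ j = i := by
  show j ∈ (if (i : ℕ) < k then some i else none) ↔ _
  split_ifs with h <;> simp [h, eq_comm]

theorem mem_smul {x y : IS n} {a c : Fin n} :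
    c ∈ smul n k x y a ↔ ∃ b ∈ x a, (b : ℕ) < k ∧ c ∈ y b := by
  simp only [smul, mem_trans, mem_sandE]
  constructor
  · rintro ⟨b, ⟨b', hb', hlt, rfl⟩, hc⟩
    exact ⟨_, hb', hlt, hc⟩
  · rintro ⟨b, hb, hlt, hc⟩
    exact ⟨b, ⟨b, hb, hlt, rfl⟩, hc⟩

theorem smul_bot (x : IS n) : smul n k x ⊥ = ⊥ := trans_bot _

theorem bot_smul (x : IS n) : smul n k ⊥ x = ⊥ := by
  rw [smul, bot_trans, bot_trans]

theorem smul_symm (x y : IS n) : (smul n k x y).symm = smul n k y.symm x.symm := by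
  rw [smul, smul, symm_trans_rev, symm_trans_rev, ← PEquiv.trans_assoc]
  rfl

theorem smul_single_single {s t : Fin n} (ht : (t : ℕ) < k) (v : Fin n) :
    smul n k (single s t) (single t v) = single s v := by
  rw [smul, single_trans_of_mem s (mem_sandE.2 ⟨ht, rfl⟩), single_trans_single]

theorem smul_single_eq_bot {s : Fin n} (hs : ¬ (s : ℕ) < k) (y : IS n) (v : Fin n) :
    smul n k y (single s v) = ⊥ := by
  refine eq_bot_iff_forall_notMem.2 fun a c hc => ?_
  obtain ⟨b, -, hb, hc⟩ := mem_smul.1 hc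
  exact hs (((mem_single_iff _ _ _ _).1 hc).1 ▸ hb)

theorem single_smul_eq_bot {t : Fin n} (ht : ¬ (t : ℕ) < k) (s : Fin n) (y : IS n) :
    smul n k (single s t) y = ⊥ := by
  refine eq_bot_iff_forall_notMem.2 fun a c hc => ?_
  obtain ⟨b, hb', hb, -⟩ := mem_smul.1 hc
  exact ht (((mem_single_iff _ _ _ _).1 hb').2 ▸ hb)

theorem smul_single_single_ne_bot_iff {s t u v : Fin n} :
    smul n k (single s t) (single u v) ≠ ⊥ ↔ (t : ℕ) < k ∧ t = u := by
  constructor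
  · intro h
    obtain ⟨a, c, hc⟩ := ne_bot_iff_exists_mem.1 h
    obtain ⟨b, hb', hb, hc⟩ := mem_smul.1 hc
    rw [mem_single_iff] at hb' hc
    exact ⟨hb'.2 ▸ hb, hb'.2.symm.trans hc.1⟩
  · rintro ⟨ht, rfl⟩
    rw [smul_single_single ht]
    exact single_ne_bot s v

end SandwichProduct

/-- The rank-one elements `[a ↦ t]` with `a ∈ A`, described inside `(IS_n, *)`: `f * x = x`
forces `dom x ⊆ A`, and minimality under left multiplication by idempotents forces rank one. -/
def IsLeftAtom (n k : ℕ) (x : IS n) : Prop :=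
  x ≠ ⊥ ∧ (∃ f, smul n k f x = x) ∧
    ∀ f, smul n k f f = f → smul n k f x = ⊥ ∨ smul n k f x = x

section LeftAtom

variable {n k : ℕ}

theorem isLeftAtom_single {a : Fin n} (ha : (a : ℕ) < k) (t : Fin n) :
    IsLeftAtom n k (single a t) := by
  refine ⟨single_ne_bot a t, ⟨single a a, smul_single_single ha t⟩, fun f hf => ?_⟩
  rcases hfa : f.symm a with _ | b
  · left
    refine eq_bot_iff_forall_notMem.2 fun c d hd => ?_
    obtain ⟨a', ha', -, hd⟩ := mem_smul.1 hd
    obtain ⟨rfl, -⟩ := (mem_single_iff _ _ _ _).1 hd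
    simpa [hfa] using (mem_iff_mem f).2 ha'
  · right
    have hab : a ∈ f b := (eq_some_iff f).1 hfa
    have haa : a ∈ f a := by
      obtain ⟨a', ha', -, haa⟩ := mem_smul.1 (hf.symm ▸ hab : a ∈ smul n k f f b)
      rwa [Option.some_injective _ (ha'.symm.trans hab)] at haa
    refine PEquiv.ext fun c => Option.ext fun d => ?_
    change d ∈ smul n k f (single a t) c ↔ d ∈ single a t c
    rw [mem_smul, mem_single_iff]
    constructor
    · rintro ⟨a', ha', -, hd⟩
      obtain ⟨rfl, rfl⟩ := (mem_single_iff _ _ _ _).1 hd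
      exact ⟨f.inj ha' haa, rfl⟩
    · rintro ⟨rfl, rfl⟩
      exact ⟨_, haa, ha, mem_single _ _⟩

theorem IsLeftAtom.exists_eq_single {x : IS n} (hx : IsLeftAtom n k x) :
    ∃ a t : Fin n, (a : ℕ) < k ∧ x = single a t := by
  obtain ⟨hx, ⟨f, hfx⟩, hmin⟩ := hx
  obtain ⟨a, t, hat⟩ := ne_bot_iff_exists_mem.1 hx
  have ha : (a : ℕ) < k := by
    obtain ⟨b, -, hb, htb⟩ := mem_smul.1 (hfx.symm ▸ hat : t ∈ smul n k f x a)
    rwa [x.inj htb hat] at hb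
  have hax : smul n k (single a a) x = single a t := by
    rw [smul, single_trans_of_mem a (mem_sandE.2 ⟨ha, rfl⟩), single_trans_of_mem a hat]
  refine ⟨a, t, ha, ?_⟩
  rcases hmin (single a a) (smul_single_single ha a) with h | h
  · exact absurd (hax ▸ h) (single_ne_bot a t)
  · exact (hax ▸ h).symm

end LeftAtom

section MapSingle

variable {n : ℕ} {σ : IS n → IS n} (hσ : Injective σ) {S T : Fin n → Fin n}
  (hST : ∀ s t, σ (single s t) = single (S s) (T t))
include hσ hST

theorem injective_left_of_map_single : Injective S := fun s s' h =>
  (single_inj.1 (hσ (by rw [hST, hST, h] : σ (single s s) = σ (single s' s)))).1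

theorem injective_right_of_map_single : Injective T := fun t t' h =>
  (single_inj.1 (hσ (by rw [hST, hST, h] : σ (single t t) = σ (single t t')))).2

end MapSingle

def IsSandwichAut (n k : ℕ) (σ : Perm (IS n)) : Prop :=
  ∀ x y, σ (smul n k x y) = smul n k (σ x) (σ y)

def transposePerm (n : ℕ) : Perm (IS n) :=
  Involutive.toPerm PEquiv.symm PEquiv.symm_symm

namespace IsSandwichAut

variable {n k : ℕ} {σ : Perm (IS n)} (hσ : IsSandwichAut n k σ)
include hσ

theorem map_bot : σ ⊥ = ⊥ := by
  simpa [bot_smul, smul_bot] using hσ ⊥ (σ.symm ⊥)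

theorem symm : IsSandwichAut n k σ.symm := fun x y =>
  σ.injective <| by rw [hσ, apply_symm_apply, apply_symm_apply, apply_symm_apply]

theorem permCongr_transposePerm : IsSandwichAut n k ((transposePerm n).permCongr σ) :=
  fun x y => by
    show (σ (smul n k x y).symm).symm = smul n k (σ x.symm).symm (σ y.symm).symm
    rw [smul_symm, hσ, smul_symm]

theorem map_ne_bot {x : IS n} (hx : x ≠ ⊥) : σ x ≠ ⊥ :=
  fun h => hx (σ.injective (h.trans hσ.map_bot.symm))

theorem isLeftAtom_map {x : IS n} (hx : IsLeftAtom n k x) : IsLeftAtom n k (σ x) := by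
  obtain ⟨hx, ⟨f, hfx⟩, hmin⟩ := hx
  refine ⟨hσ.map_ne_bot hx, ⟨σ f, by rw [← hσ, hfx]⟩, fun f hf => ?_⟩
  have hf' : smul n k (σ.symm f) (σ.symm f) = σ.symm f := by rw [← hσ.symm, hf]
  refine (hmin _ hf').imp (fun h => ?_) fun h => ?_
  · rw [← hσ.map_bot, ← h, hσ, apply_symm_apply]
  · conv_rhs => rw [← h]
    rw [hσ, apply_symm_apply]

theorem exists_map_single_of_lt_left {a : Fin n} (ha : (a : ℕ) < k) (t : Fin n) :
    ∃ a' t', σ (single a t) = single a' t' := by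
  obtain ⟨a', t', -, h⟩ := (hσ.isLeftAtom_map (isLeftAtom_single ha t)).exists_eq_single
  exact ⟨a', t', h⟩

theorem exists_map_single_of_lt_right {b : Fin n} (hb : (b : ℕ) < k) (s : Fin n) :
    ∃ s' b', σ (single s b) = single s' b' := by
  obtain ⟨b', s', h⟩ := hσ.permCongr_transposePerm.exists_map_single_of_lt_left hb s
  change (σ (single b s).symm).symm = single b' s' at h
  rw [symm_single] at h
  refine ⟨s', b', ?_⟩
  rw [← symm_symm (σ (single s b)), h, symm_single]

theorem exists_map_single (hk : 0 < k) :
    ∃ S T : Fin n → Fin n, ∀ s t, σ (single s t) = single (S s) (T t) := by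
  choose S B hSB using fun s : Fin n => hσ.exists_map_single_of_lt_right (b := ⟨0, s.pos⟩) hk s
  choose A T hAT using fun t : Fin n => hσ.exists_map_single_of_lt_left (a := ⟨0, t.pos⟩) hk t
  refine ⟨S, T, fun s t => ?_⟩
  have hst : σ (single s t) = smul n k (single (S s) (B s)) (single (A t) (T t)) := by
    rw [← hSB, ← hAT, ← hσ, smul_single_single hk]
  obtain ⟨hB, hBA⟩ := smul_single_single_ne_bot_iff.1
    (hst ▸ hσ.map_ne_bot (single_ne_bot s t))
  rw [hst, ← hBA, smul_single_single hB]

section Components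

variable {S T : Fin n → Fin n} (hST : ∀ s t, σ (single s t) = single (S s) (T t))
include hST

theorem right_lt_and_eq_left {a : Fin n} (ha : (a : ℕ) < k) : (T a : ℕ) < k ∧ T a = S a := by
  refine (smul_single_single_ne_bot_iff (s := S a) (v := T a)).1 ?_
  rw [← hST, ← hσ, smul_single_single ha]
  exact hσ.map_ne_bot (single_ne_bot a a)

theorem left_lt_iff (s : Fin n) : (S s : ℕ) < k ↔ (s : ℕ) < k := by
  refine ⟨fun hS => ?_, fun hs => ?_⟩
  swap
  · obtain ⟨hT, hTS⟩ := hσ.right_lt_and_eq_left hST hs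
    exact hTS ▸ hT
  by_contra hs
  have h := congrArg σ (smul_single_eq_bot hs (σ.symm (single (S s) (S s))) s)
  rw [hσ, apply_symm_apply, hST, smul_single_single hS, hσ.map_bot] at h
  exact single_ne_bot _ _ h

theorem right_lt_iff (t : Fin n) : (T t : ℕ) < k ↔ (t : ℕ) < k := by
  refine ⟨fun hT => ?_, fun ht => (hσ.right_lt_and_eq_left hST ht).1⟩
  by_contra ht
  have h := congrArg σ (single_smul_eq_bot ht t (σ.symm (single (T t) (T t))))
  rw [hσ, apply_symm_apply, hST, smul_single_single hT, hσ.map_bot] at h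
  exact single_ne_bot _ _ h

end Components

end IsSandwichAut

theorem aut_on_rank_one_general (n k : ℕ) (hk : 1 ≤ k)
    (σ : Equiv.Perm (IS n))
    (hσ : ∀ x y : IS n, σ (smul n k x y) = smul n k (σ x) (σ y)) :
    ∃ (g : Perm {x : Fin n // (x : ℕ) < k})
      (h₁ h₂ : Perm {x : Fin n // ¬ (x : ℕ) < k}),
      ∀ s t : Fin n, σ (PEquiv.single s t) =
        PEquiv.single (bowtie k g h₁ s) (bowtie k g h₂ t) := by
  have hσ : IsSandwichAut n k σ := hσ
  obtain ⟨S, T, hST⟩ := hσ.exists_map_single hk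
  obtain ⟨g, h₁, h₂, hS, hT⟩ := exists_bowtie_eq (injective_left_of_map_single σ.injective hST)
    (injective_right_of_map_single σ.injective hST) (hσ.left_lt_iff hST) (hσ.right_lt_iff hST)
    fun a ha => (hσ.right_lt_and_eq_left hST ha).2.symm
  exact ⟨g, h₁, h₂, fun s t => by rw [hST, hS, hT]⟩

/-- every automorphism `σ` of `(IS_n, *)` acts on rank-one elements
as `[s ↦ t] ↦ [(g⋈h₁)(s) ↦ (g⋈h₂)(t)]` for suitable `g ∈ S(A)`, `h₁, h₂ ∈ S(Ā)`. -/
theorem aut_on_rank_one (n k : ℕ) (hk : 1 ≤ k) (hkn : k ≤ n)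
    (σ : Equiv.Perm (IS n))
    (hσ : ∀ x y : IS n, σ (smul n k x y) = smul n k (σ x) (σ y)) :
    ∃ (g : Perm {x : Fin n // (x : ℕ) < k})
      (h₁ h₂ : Perm {x : Fin n // ¬ (x : ℕ) < k}),
      ∀ s t : Fin n, σ (PEquiv.single s t) =
        PEquiv.single (bowtie k g h₁ s) (bowtie k g h₂ t) :=
  aut_on_rank_one_general n k hk σ hσ
end

section
/- Let σ be a semigroup automorphism of (IS_n, *), and let g ∈ S(A), h₁, h₂ ∈ S(Ā) be such that σ([s ↦ t]) = [(g⋈h₁)(s) ↦ (g⋈h₂)(t)] for all s, t ∈ N. Then for every a ∈ IS_n: M₁(σ(a)) = g(M₁(a)) with σ(a)(g(x)) = g(a(x)) for all x ∈ M₁(a); M₂(σ(a)) = g(M₂(a)) with σ(a)(g(x)) = h₂(a(x)) for all x ∈ M₂(a); and M₃(σ(a)) = h₁(M₃(a)) with σ(a)(h₁(x)) = g(a(x)) for all x ∈ M₃(a). -/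
open Equiv

/-!
For `x ∈ A` the sandwich product `[x ↦ x] * a` is `[x ↦ a x]`, and for `a x = y ∈ A` the
product `a * [y ↦ y]` is `[x ↦ y]`. Applying `σ` to these identities and evaluating the
resulting rank-one elements at `(g⋈h₁)(x)` shows `σ a ((g⋈h₁) x) = (g⋈h₂)(a x)` whenever
`x ∈ A` or `a x ∈ A`. The converse implication is the same argument for `σ⁻¹`, which acts on
rank-one elements through `g⁻¹, h₁⁻¹, h₂⁻¹`; together they transport each set `Mᵢ` along `g⋈h₁`.
-/

def domInto {α β : Type*} (f : α → Option β) (P : Set α) (Q : Set β) : Set α :=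
  {x | x ∈ P ∧ ∃ y ∈ Q, f x = some y}

theorem domInto_transport {α β : Type*} {a b : α → Option β} (e₁ : Perm α) (e₂ : Perm β)
    {P : Set α} {Q : Set β} (hP : ∀ x, e₁ x ∈ P ↔ x ∈ P) (hQ : ∀ y, e₂ y ∈ Q ↔ y ∈ Q)
    (h : ∀ x ∈ P, ∀ y ∈ Q, b (e₁ x) = some (e₂ y) ↔ a x = some y) :
    domInto b P Q = e₁ '' domInto a P Q ∧ ∀ x ∈ domInto a P Q, b (e₁ x) = (a x).map e₂ := by
  constructor
  · ext u
    obtain ⟨x, rfl⟩ := e₁.surjective u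
    rw [e₁.injective.mem_set_image]
    simp only [domInto, Set.mem_ofPred_eq, hP]
    refine and_congr_right fun hx => ⟨fun ⟨v, hv, hxv⟩ => ?_, fun ⟨y, hy, hxy⟩ => ?_⟩
    · obtain ⟨y, rfl⟩ := e₂.surjective v
      exact ⟨y, (hQ y).1 hv, (h x hx y ((hQ y).1 hv)).1 hxv⟩
    · exact ⟨e₂ y, (hQ y).2 hy, (h x hx y hy).2 hxy⟩
  · rintro x ⟨hx, y, hy, hxy⟩
    rw [hxy, Option.map_some]
    exact (h x hx y hy).2 hxy

section SandwichSemigroup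

variable {n k : ℕ}

theorem M1_eq_domInto (a : IS n) : M1 n k a = domInto a (SetA n k) (SetA n k) := rfl

theorem M2_eq_domInto (a : IS n) : M2 n k a = domInto a (SetA n k) (SetA n k)ᶜ := rfl

theorem M3_eq_domInto (a : IS n) : M3 n k a = domInto a (SetA n k)ᶜ (SetA n k) := rfl

theorem mem_setA_iff {x : Fin n} : x ∈ SetA n k ↔ (x : ℕ) < k := Iff.rfl

theorem bowtie_mem_setA_iff (g : Perm {x : Fin n // (x : ℕ) < k})
    (h : Perm {x : Fin n // ¬ (x : ℕ) < k}) (x : Fin n) :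
    bowtie k g h x ∈ SetA n k ↔ x ∈ SetA n k := by
  by_cases hx : (x : ℕ) < k
  · rw [bowtie, Perm.subtypeCongr.left_apply (a := x) _ _ hx]
    exact iff_of_true (g _).2 hx
  · rw [bowtie, Perm.subtypeCongr.right_apply (a := x) _ _ hx]
    exact iff_of_false (h _).2 hx

theorem bowtie_apply_of_mem_setA (g : Perm {x : Fin n // (x : ℕ) < k})
    (h₁ h₂ : Perm {x : Fin n // ¬ (x : ℕ) < k}) {x : Fin n} (hx : x ∈ SetA n k) :
    bowtie k g h₁ x = bowtie k g h₂ x := by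
  rw [mem_setA_iff] at hx
  rw [bowtie, bowtie, Perm.subtypeCongr.left_apply (a := x) _ _ hx,
    Perm.subtypeCongr.left_apply (a := x) _ _ hx]

theorem bowtie_symm (g : Perm {x : Fin n // (x : ℕ) < k})
    (h : Perm {x : Fin n // ¬ (x : ℕ) < k}) :
    (bowtie k g h).symm = bowtie k g.symm h.symm :=
  rfl

theorem sandE_apply_of_mem {x : Fin n} (hx : x ∈ SetA n k) : sandE n k x = some x :=
  if_pos hx

theorem single_smul (s : Fin n) {x : Fin n} (hx : x ∈ SetA n k) (a : IS n) :
    smul n k (PEquiv.single s x) a = (PEquiv.single s x).trans a := by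
  rw [smul, PEquiv.single_trans_of_mem s (sandE_apply_of_mem hx)]

theorem smul_single (a : IS n) {y : Fin n} (hy : y ∈ SetA n k) (t : Fin n) :
    smul n k a (PEquiv.single y t) = a.trans (PEquiv.single y t) := by
  rw [smul, PEquiv.trans_assoc, PEquiv.trans_single_of_mem t (sandE_apply_of_mem hy)]

def PreservesSandwich (n k : ℕ) (σ : IS n → IS n) : Prop :=
  ∀ x y : IS n, σ (smul n k x y) = smul n k (σ x) (σ y)

def ActsOnSingles (k : ℕ) (σ : IS n → IS n) (g : Perm {x : Fin n // (x : ℕ) < k})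
    (h₁ h₂ : Perm {x : Fin n // ¬ (x : ℕ) < k}) : Prop :=
  ∀ s t : Fin n, σ (PEquiv.single s t) = PEquiv.single (bowtie k g h₁ s) (bowtie k g h₂ t)

theorem PreservesSandwich.symm {σ : Perm (IS n)} (hσ : PreservesSandwich n k σ) :
    PreservesSandwich n k σ.symm := fun x y =>
  σ.injective (by rw [hσ, σ.apply_symm_apply, σ.apply_symm_apply, σ.apply_symm_apply])

variable {σ : IS n → IS n} {g : Perm {x : Fin n // (x : ℕ) < k}}
  {h₁ h₂ : Perm {x : Fin n // ¬ (x : ℕ) < k}}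

theorem ActsOnSingles.symm {σ : Perm (IS n)} (hs : ActsOnSingles k σ g h₁ h₂) :
    ActsOnSingles k σ.symm g.symm h₁.symm h₂.symm := fun s t => by
  rw [Equiv.symm_apply_eq, hs, ← bowtie_symm, ← bowtie_symm, Equiv.apply_symm_apply,
    Equiv.apply_symm_apply]

theorem ActsOnSingles.apply_bowtie_of_mem_left (hσ : PreservesSandwich n k σ)
    (hs : ActsOnSingles k σ g h₁ h₂) {a : IS n} {x y : Fin n} (hx : x ∈ SetA n k)
    (hxy : a x = some y) : σ a (bowtie k g h₁ x) = some (bowtie k g h₂ y) := by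
  have hp : bowtie k g h₁ x ∈ SetA n k := (bowtie_mem_setA_iff g h₁ x).2 hx
  have hσa : PEquiv.single (bowtie k g h₁ x) (bowtie k g h₂ y) =
      (PEquiv.single (bowtie k g h₁ x) (bowtie k g h₁ x)).trans (σ a) := by
    rw [← hs, ← PEquiv.single_trans_of_mem x hxy, ← single_smul x hx, hσ, hs,
      ← bowtie_apply_of_mem_setA g h₁ h₂ hx, single_smul _ hp]
  obtain ⟨b, hb, hbσ⟩ := (PEquiv.trans_eq_some _ _ _ _).1
    (hσa ▸ PEquiv.single_apply (bowtie k g h₁ x) (bowtie k g h₂ y))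
  rw [PEquiv.single_apply, Option.some_inj] at hb
  rwa [hb]

theorem ActsOnSingles.apply_bowtie_of_mem_right (hσ : PreservesSandwich n k σ)
    (hs : ActsOnSingles k σ g h₁ h₂) {a : IS n} {x y : Fin n} (hy : y ∈ SetA n k)
    (hxy : a x = some y) : σ a (bowtie k g h₁ x) = some (bowtie k g h₂ y) := by
  have hq : bowtie k g h₁ y ∈ SetA n k := (bowtie_mem_setA_iff g h₁ y).2 hy
  have hσa : PEquiv.single (bowtie k g h₁ x) (bowtie k g h₂ y) =
      (σ a).trans (PEquiv.single (bowtie k g h₁ y) (bowtie k g h₂ y)) := by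
    rw [← hs, ← PEquiv.trans_single_of_mem y hxy, ← smul_single a hy, hσ, hs, smul_single _ hq]
  obtain ⟨b, hb, hbq⟩ := (PEquiv.trans_eq_some _ _ _ _).1
    (hσa ▸ PEquiv.single_apply (bowtie k g h₁ x) (bowtie k g h₂ y))
  obtain ⟨rfl, -⟩ := (PEquiv.mem_single_iff _ _ _ _).1 hbq
  rw [hb, ← bowtie_apply_of_mem_setA g h₁ h₂ hy]

theorem ActsOnSingles.apply_bowtie (hσ : PreservesSandwich n k σ)
    (hs : ActsOnSingles k σ g h₁ h₂) {a : IS n} {x y : Fin n}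
    (hA : x ∈ SetA n k ∨ y ∈ SetA n k) (hxy : a x = some y) :
    σ a (bowtie k g h₁ x) = some (bowtie k g h₂ y) :=
  hA.elim (hs.apply_bowtie_of_mem_left hσ · hxy) (hs.apply_bowtie_of_mem_right hσ · hxy)

theorem ActsOnSingles.apply_bowtie_eq_some_iff {σ : Perm (IS n)} (hσ : PreservesSandwich n k σ)
    (hs : ActsOnSingles k σ g h₁ h₂) {a : IS n} {x y : Fin n}
    (hA : x ∈ SetA n k ∨ y ∈ SetA n k) :
    σ a (bowtie k g h₁ x) = some (bowtie k g h₂ y) ↔ a x = some y := by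
  refine ⟨fun h => ?_, hs.apply_bowtie hσ hA⟩
  have hA' : bowtie k g h₁ x ∈ SetA n k ∨ bowtie k g h₂ y ∈ SetA n k := by
    rwa [bowtie_mem_setA_iff, bowtie_mem_setA_iff]
  have := hs.symm.apply_bowtie hσ.symm hA' h
  rwa [← bowtie_symm, ← bowtie_symm, Equiv.symm_apply_apply, Equiv.symm_apply_apply,
    Equiv.symm_apply_apply] at this

end SandwichSemigroup

theorem aut_action_on_M_sets_general (n k : ℕ)
    (σ : Equiv.Perm (IS n))
    (hσ : ∀ x y : IS n, σ (smul n k x y) = smul n k (σ x) (σ y))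
    (g : Perm {x : Fin n // (x : ℕ) < k})
    (h₁ h₂ : Perm {x : Fin n // ¬ (x : ℕ) < k})
    (hform : ∀ s t : Fin n, σ (PEquiv.single s t) =
      PEquiv.single (bowtie k g h₁ s) (bowtie k g h₂ t)) :
    ∀ a : IS n,
      (M1 n k (σ a) = bowtie k g h₁ '' M1 n k a ∧
        ∀ x ∈ M1 n k a, (σ a) (bowtie k g h₁ x) = (a x).map (bowtie k g h₂)) ∧
      (M2 n k (σ a) = bowtie k g h₁ '' M2 n k a ∧
        ∀ x ∈ M2 n k a, (σ a) (bowtie k g h₁ x) = (a x).map (bowtie k g h₂)) ∧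
      (M3 n k (σ a) = bowtie k g h₁ '' M3 n k a ∧
        ∀ x ∈ M3 n k a, (σ a) (bowtie k g h₁ x) = (a x).map (bowtie k g h₂)) := by
  intro a
  have key : ∀ x y, x ∈ SetA n k ∨ y ∈ SetA n k →
      (σ a (bowtie k g h₁ x) = some (bowtie k g h₂ y) ↔ a x = some y) := fun _ _ hA =>
    ActsOnSingles.apply_bowtie_eq_some_iff (g := g) hσ hform hA
  have hA₁ := bowtie_mem_setA_iff g h₁
  have hA₂ := bowtie_mem_setA_iff g h₂
  simp only [M1_eq_domInto, M2_eq_domInto, M3_eq_domInto]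
  exact ⟨domInto_transport _ _ hA₁ hA₂ fun x hx y _ => key x y (.inl hx),
    domInto_transport _ _ hA₁ (fun y => (hA₂ y).not) fun x hx y _ => key x y (.inl hx),
    domInto_transport _ _ (fun x => (hA₁ x).not) hA₂ fun x _ y hy => key x y (.inr hy)⟩

/-- if an automorphism `σ` of `(IS_n, *)` acts on rank-one elements
via `g, h₁, h₂` then for each `a`: `M₁(σ a) = g(M₁ a)` with `σ a (g x) = g (a x)`,
`M₂(σ a) = g(M₂ a)` with `σ a (g x) = h₂ (a x)`, and `M₃(σ a) = h₁(M₃ a)` with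
`σ a (h₁ x) = g (a x)` (here `g⋈h₁` acts as `g` on `A` and `h₁` on `Ā`, etc.). -/
theorem aut_action_on_M_sets (n k : ℕ) (hk : 1 ≤ k) (hkn : k ≤ n)
    (σ : Equiv.Perm (IS n))
    (hσ : ∀ x y : IS n, σ (smul n k x y) = smul n k (σ x) (σ y))
    (g : Perm {x : Fin n // (x : ℕ) < k})
    (h₁ h₂ : Perm {x : Fin n // ¬ (x : ℕ) < k})
    (hform : ∀ s t : Fin n, σ (PEquiv.single s t) =
      PEquiv.single (bowtie k g h₁ s) (bowtie k g h₂ t)) :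
    ∀ a : IS n,
      (M1 n k (σ a) = bowtie k g h₁ '' M1 n k a ∧
        ∀ x ∈ M1 n k a, (σ a) (bowtie k g h₁ x) = (a x).map (bowtie k g h₂)) ∧
      (M2 n k (σ a) = bowtie k g h₁ '' M2 n k a ∧
        ∀ x ∈ M2 n k a, (σ a) (bowtie k g h₁ x) = (a x).map (bowtie k g h₂)) ∧
      (M3 n k (σ a) = bowtie k g h₁ '' M3 n k a ∧
        ∀ x ∈ M3 n k a, (σ a) (bowtie k g h₁ x) = (a x).map (bowtie k g h₂)) :=
  aut_action_on_M_sets_general n k σ hσ g h₁ h₂ hform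
end
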